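/- Let n ≥ 2 and let f : ℝⁿ → ℝ be continuous, nonnegative and Lebesgue integrable with β := ∫_{ℝⁿ} f dx, such that y ↦ log(|y|/|x−y|) f(y) is Lebesgue integrable for every x ∈ ℝⁿ. Let x, y ∈ ℝⁿ with |x−y| = 2 and midpoint p₀ = (x+y)/2. Define u₋(x) := −(1/c_n) ∫_{ℝⁿ} log(|y|/|x−y|) f(y) dy, u₂(x) := −(1/c_n) ∫_{ℝⁿ ∖ B(p₀,10)} log(|y|/|x−y|) f(y) dy, and c̄ := −(1/c_n) ∫_{B(p₀,10)} log|y| · f(y) dy. Then there exists a constant C₄ > 0 depending only on n and β such that for every L ≥ 0 and every 1-Lipschitz curve γ : [0,L] → ℝⁿ with γ(0) = x, γ(L) = y and image contained in the closed ball of center p₀ and radius 1, one has ∫₀^L e^{u₋(γ(t))} dt ≥ C₄ · e^{u₂(p₀)} · e^{c̄}. -/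

import Mathlib

open MeasureTheory Metric Set
open scoped ENNReal

/-- `c_n := 2^{n-2} Γ(n/2) π^{n/2}`. -/
noncomputable def cN (n : ℕ) : ℝ :=
  (2 : ℝ) ^ ((n : ℝ) - 2) * Real.Gamma ((n : ℝ) / 2) * Real.pi ^ ((n : ℝ) / 2)

/-- Logarithmic potential `u(x) = (1/c_n) ∫ log(|y|/|x-y|) f(y) dy`. -/
noncomputable def logPot (n : ℕ) (f : EuclideanSpace ℝ (Fin n) → ℝ)
    (x : EuclideanSpace ℝ (Fin n)) : ℝ :=
  (1 / cN n) * ∫ y, Real.log (‖y‖ / ‖x - y‖) * f y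

/-- `ω` is an `A_p` weight with constant `K` (for `p > 1`):
for every ball `B`, `(⨍_B ω) · (⨍_B ω^{-1/(p-1)})^{p-1} ≤ K`. -/
def IsApWeight (n : ℕ) (p K : ℝ) (ω : EuclideanSpace ℝ (Fin n) → ℝ) : Prop :=
  ∀ (x : EuclideanSpace ℝ (Fin n)) (r : ℝ), 0 < r →
    ((volume (ball x r)).toReal⁻¹ * ∫ y in ball x r, ω y) *
      ((volume (ball x r)).toReal⁻¹ *
        ∫ y in ball x r, (ω y) ^ (-(1 / (p - 1)) : ℝ)) ^ (p - 1) ≤ K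

/-- `δ_ω(x,y) = (∫_{B_{xy}} ω)^{1/n}`, where `B_{xy}` is the closed ball with
center `(x+y)/2` and radius `|x-y|/2`. -/
noncomputable def deltaW (n : ℕ) (ω : EuclideanSpace ℝ (Fin n) → ℝ)
    (x y : EuclideanSpace ℝ (Fin n)) : ℝ :=
  (∫ z in closedBall (midpoint ℝ x y) (dist x y / 2), ω z) ^ ((1 : ℝ) / n)

/-- `d_ω(x,y)`: infimum of `∫₀^L ω(γ(t))^{1/n} dt` over all `L ≥ 0` and all
1-Lipschitz curves `γ : [0,L] → ℝⁿ` joining `x` to `y` inside `B_{xy}`. -/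
noncomputable def dW (n : ℕ) (ω : EuclideanSpace ℝ (Fin n) → ℝ)
    (x y : EuclideanSpace ℝ (Fin n)) : ℝ :=
  sInf {d : ℝ | ∃ (L : ℝ) (γ : ℝ → EuclideanSpace ℝ (Fin n)),
    0 ≤ L ∧ LipschitzOnWith 1 γ (Set.Icc 0 L) ∧ γ 0 = x ∧ γ L = y ∧
    (∀ t ∈ Set.Icc 0 L, γ t ∈ closedBall (midpoint ℝ x y) (dist x y / 2)) ∧
    d = ∫ t in (0 : ℝ)..L, (ω (γ t)) ^ ((1 : ℝ) / n)}

/-- One-dimensional Hausdorff content: infimum of `Σᵢ diam Bᵢ` over countable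
covers of `E` by balls `Bᵢ`. -/
noncomputable def H1content {n : ℕ} (E : Set (EuclideanSpace ℝ (Fin n))) : ℝ≥0∞ :=
  ⨅ (c : ℕ → EuclideanSpace ℝ (Fin n) × ℝ) (_ : E ⊆ ⋃ i, ball (c i).1 (c i).2),
    ∑' i, ENNReal.ofReal (2 * (c i).2)

/-!
Split `log (‖w‖ / ‖z - w‖)` at the ball `B = B(p₀, 10)`. For `z` within distance `1` of `p₀` the
far part moves by at most `β / 9` from its value at `p₀`, and on `B` the kernel equals
`log ‖w‖ - log ‖z - w‖`. Hence `e^{u₋(z)} ≥ C₄ e^{u₂(p₀)} e^{c̄}` as soon as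
`-∫_B log ‖z - w‖ f(w) dw < 2β + 1`.

The curve spends time at least `1` at such points. With `e = (y - x) / 2` we have
`‖z - w‖ ≥ |⟪e, z⟫ - ⟪e, w⟫|`, so `-∫_B log ‖z - w‖ f ≤ W(⟪e, z⟫)` for
`W(σ) = ∫_B log⁺ (1 / |σ - ⟪e, w⟫|) f(w) dw`. By Tonelli `∫_ℝ W ≤ 2β`, so by Markov `W < 2β + 1`
on a subset of `[⟪e, x⟫, ⟪e, x⟫ + 2]` of measure at least `1`, and the `1`-Lipschitz height
`t ↦ ⟪e, γ t⟫`, which runs through this whole interval, spends time at least `1` in that subset.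
-/

open Real
open scoped RealInnerProductSpace

theorem lintegral_ofReal_neg_log_abs_sub (c : ℝ) :
    ∫⁻ s, ENNReal.ofReal (-log |s - c|) = 2 := by
  have hsupp : (Function.support fun s : ℝ => ENNReal.ofReal (-log |s|)) ⊆ Icc (-1) 1 := by
    intro s hs
    by_contra hs'
    rw [mem_Icc, ← abs_le, not_le] at hs'
    exact hs (ENNReal.ofReal_eq_zero.2 (by linarith [log_pos hs']))
  have hint : IntegrableOn (fun s : ℝ => -log |s|) (Icc (-1) 1) := by
    simp only [log_abs]
    exact ((integrableOn_Icc_iff_integrableOn_Ioc (by simp)).2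
      intervalIntegral.intervalIntegrable_log'.1).neg
  have hnonneg : ∀ᵐ s ∂(volume.restrict (Icc (-1 : ℝ) 1)), 0 ≤ -log |s| := by
    filter_upwards [ae_restrict_mem measurableSet_Icc] with s hs
    exact neg_nonneg.2 (log_nonpos (abs_nonneg s) (abs_le.2 hs))
  rw [lintegral_sub_right_eq_self (fun s => ENNReal.ofReal (-log |s|)) c,
    ← setLIntegral_eq_of_support_subset hsupp, ← ofReal_integral_eq_lintegral_ofReal hint hnonneg,
    integral_Icc_eq_integral_Ioc, ← intervalIntegral.integral_of_le (by norm_num)]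
  simp only [log_abs, intervalIntegral.integral_neg, integral_log]
  norm_num

theorem lintegral_lintegral_ofReal_neg_log_abs_sub_mul {X : Type*} [MeasurableSpace X]
    {ν : Measure X} [SFinite ν] {φ : X → ℝ} (hφ : Measurable φ) {g : X → ℝ≥0∞}
    (hg : Measurable g) :
    ∫⁻ s, ∫⁻ w, ENNReal.ofReal (-log |s - φ w|) * g w ∂ν = 2 * ∫⁻ w, g w ∂ν := by
  have hk : Measurable fun p : ℝ × X => ENNReal.ofReal (-log |p.1 - φ p.2|) := by fun_prop
  rw [lintegral_lintegral_swap (hk.mul (hg.comp measurable_snd)).aemeasurable,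
    ← lintegral_const_mul _ hg]
  refine lintegral_congr fun w => ?_
  rw [lintegral_mul_const _ (by fun_prop), lintegral_ofReal_neg_log_abs_sub]

theorem LipschitzOnWith.exists_lipschitzWith_eqOn_Icc {X : Type*} [PseudoEMetricSpace X]
    {K : NNReal} {γ : ℝ → X} {a b : ℝ} (hab : a ≤ b) (hγ : LipschitzOnWith K γ (Icc a b)) :
    ∃ γ' : ℝ → X, LipschitzWith K γ' ∧ EqOn γ' γ (Icc a b) := by
  refine ⟨fun t => γ (projIcc a b hab t), ?_, fun t ht => by simp [projIcc_of_mem hab ht]⟩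
  have := hγ.comp (((LipschitzWith.subtype_val _).comp
    (LipschitzWith.projIcc hab)).lipschitzOnWith (s := univ)) fun t _ => (projIcc a b hab t).2
  simpa [Function.comp_def] using lipschitzOnWith_univ.1 this

theorem volume_le_volume_Icc_inter_preimage {h : ℝ → ℝ} (hh : LipschitzWith 1 h) {a b : ℝ}
    (hab : a ≤ b) {S : Set ℝ} (hS : S ⊆ Icc (h a) (h b)) :
    volume S ≤ volume (Icc a b ∩ h ⁻¹' S) := by
  have hsub : S ⊆ h '' (Icc a b ∩ h ⁻¹' S) := by
    intro s hs
    obtain ⟨t, ht, rfl⟩ := intermediate_value_Icc hab hh.continuous.continuousOn (hS hs)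
    exact ⟨t, ⟨ht, hs⟩, rfl⟩
  calc volume S ≤ volume (h '' (Icc a b ∩ h ⁻¹' S)) := measure_mono hsub
    _ ≤ volume (Icc a b ∩ h ⁻¹' S) := by
      simpa [hausdorffMeasure_real] using
        hh.hausdorffMeasure_image_le zero_le_one (Icc a b ∩ h ⁻¹' S)

theorem one_le_volume_Icc_inter_setOf_lt {W : ℝ → ℝ≥0∞} (hW : AEMeasurable W) {M : ℝ}
    (hM : 0 ≤ M) (hWM : ∫⁻ s, W s ≤ ENNReal.ofReal M) (a : ℝ) :
    1 ≤ volume (Icc a (a + 2) ∩ {s | W s < ENNReal.ofReal (M + 1)}) := by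
  have hbad : volume {s | ENNReal.ofReal (M + 1) ≤ W s} ≤ 1 := by
    have hm : ENNReal.ofReal (M + 1) ≠ 0 := by simp; linarith
    refine (ENNReal.mul_le_mul_iff_right hm ENNReal.ofReal_ne_top).1 ?_
    calc ENNReal.ofReal (M + 1) * volume {s | ENNReal.ofReal (M + 1) ≤ W s}
        ≤ ∫⁻ s, W s := mul_meas_ge_le_lintegral₀ hW _
      _ ≤ ENNReal.ofReal (M + 1) * 1 := by
        rw [mul_one]; exact hWM.trans (ENNReal.ofReal_le_ofReal (by linarith))
  have hcover : Icc a (a + 2) ⊆ (Icc a (a + 2) ∩ {s | W s < ENNReal.ofReal (M + 1)}) ∪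
      {s | ENNReal.ofReal (M + 1) ≤ W s} := fun s hs => by
    rcases lt_or_ge (W s) (ENNReal.ofReal (M + 1)) with h | h
    exacts [Or.inl ⟨hs, h⟩, Or.inr h]
  refine ENNReal.le_of_add_le_add_right ENNReal.one_ne_top ?_
  calc 1 + 1 = volume (Icc a (a + 2)) := by simp [one_add_one_eq_two]
    _ ≤ _ := (measure_mono hcover).trans (measure_union_le _ _)
    _ ≤ _ := by gcongr

theorem mul_measureReal_le_intervalIntegral {g : ℝ → ℝ} {a b ρ : ℝ} (hab : a ≤ b)
    (hg : IntegrableOn g (Icc a b)) (hg0 : ∀ t ∈ Icc a b, 0 ≤ g t) {T : Set ℝ}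
    (hT : MeasurableSet T) (hTab : T ⊆ Icc a b) (hρ : ∀ t ∈ T, ρ ≤ g t) :
    ρ * volume.real T ≤ ∫ t in a..b, g t := by
  rw [intervalIntegral.integral_of_le hab, ← integral_Icc_eq_integral_Ioc]
  calc ρ * volume.real T = ∫ _ in T, ρ := by rw [setIntegral_const, smul_eq_mul, mul_comm]
    _ ≤ ∫ t in T, g t := setIntegral_mono_on
        (integrableOn_const (measure_mono hTab |>.trans_lt measure_Icc_lt_top).ne)
        (hg.mono_set hTab) hT hρ
    _ ≤ ∫ t in Icc a b, g t := setIntegral_mono_set hg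
        ((ae_restrict_iff' measurableSet_Icc).2 (ae_of_all _ hg0)) hTab.eventuallyLE

theorem ofReal_integral_le_lintegral_ofReal {X : Type*} [MeasurableSpace X] {μ : Measure X}
    (g : X → ℝ) : ENNReal.ofReal (∫ x, g x ∂μ) ≤ ∫⁻ x, ENNReal.ofReal (g x) ∂μ := by
  by_cases hg : Integrable g μ
  · calc ENNReal.ofReal (∫ x, g x ∂μ) ≤ ENNReal.ofReal (∫⁻ x, ENNReal.ofReal (g x) ∂μ).toReal :=
          ENNReal.ofReal_le_ofReal <| by
            rw [integral_eq_lintegral_pos_part_sub_lintegral_neg_part hg]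
            linarith [ENNReal.toReal_nonneg (a := ∫⁻ x, ENNReal.ofReal (-g x) ∂μ)]
      _ ≤ ∫⁻ x, ENNReal.ofReal (g x) ∂μ := ENNReal.ofReal_toReal_le
  · simp [integral_undef hg]

theorem abs_log_sub_log_le {a b c : ℝ} (hc : 0 < c) (ha : c ≤ a) (hb : c ≤ b) :
    |log a - log b| ≤ |a - b| / c := by
  have key : ∀ {u v : ℝ}, c ≤ u → c ≤ v → log u - log v ≤ |u - v| / c := fun {u v} hu hv => by
    have hv0 : 0 < v := hc.trans_le hv
    calc log u - log v = log (u / v) := (log_div (by linarith) hv0.ne').symm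
      _ ≤ u / v - 1 := log_le_sub_one_of_pos (div_pos (by linarith) hv0)
      _ = (u - v) / v := by field_simp
      _ ≤ |u - v| / v := by gcongr; exact le_abs_self _
      _ ≤ |u - v| / c := by gcongr
  rw [abs_sub_le_iff]
  exact ⟨key ha hb, abs_sub_comm a b ▸ key hb ha⟩

section LogPotential

variable {E : Type*} [NormedAddCommGroup E] [MeasurableSpace E]
  {μ : Measure E} {f : E → ℝ} {s : Set E} {p₀ z : E} {r R : ℝ}

theorem ae_log_norm_div_norm_sub_eq [NullSingletonClass μ] (z : E) :
    ∀ᵐ w ∂μ, log (‖w‖ / ‖z - w‖) = log ‖w‖ - log ‖z - w‖ := by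
  filter_upwards [μ.ae_ne 0, μ.ae_ne z] with w hw0 hwz
  exact log_div (norm_ne_zero_iff.2 hw0) (norm_ne_zero_iff.2 (sub_ne_zero.2 (Ne.symm hwz)))

theorem integrableOn_log_norm_sub_mul [NullSingletonClass μ]
    (hz : Integrable (fun w => log (‖w‖ / ‖z - w‖) * f w) μ)
    (h0 : IntegrableOn (fun w => log ‖w‖ * f w) s μ) :
    IntegrableOn (fun w => log ‖z - w‖ * f w) s μ := by
  refine (h0.sub hz.integrableOn).congr (ae_restrict_of_ae ?_)
  filter_upwards [ae_log_norm_div_norm_sub_eq z] with w hw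
  simp only [Pi.sub_apply, hw]; ring

theorem integrableOn_ball_log_norm_mul [NormedSpace ℝ E] [Nontrivial E] [BorelSpace E]
    [NullSingletonClass μ] (hfi : Integrable f μ)
    (hint : ∀ x, Integrable (fun w => log (‖w‖ / ‖x - w‖) * f w) μ) (p₀ : E) (R : ℝ) :
    IntegrableOn (fun w => log ‖w‖ * f w) (ball p₀ R) μ := by
  -- `log ‖w‖ = log (‖w‖ / ‖q - w‖) + log ‖q - w‖`, and the last term is bounded on the ball
  -- for a point `q = p₀ + v` far enough from it.
  obtain ⟨v, hv⟩ := exists_norm_eq E (show 0 ≤ |R| + 1 by positivity)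
  have hq : ∀ w ∈ ball p₀ R, 1 ≤ ‖p₀ + v - w‖ ∧ ‖p₀ + v - w‖ ≤ 2 * |R| + 1 := by
    intro w hw
    rw [mem_ball, dist_eq_norm] at hw
    rw [show p₀ + v - w = v - (w - p₀) by abel]
    constructor
    · linarith [norm_sub_norm_le v (w - p₀), le_abs_self R]
    · linarith [norm_sub_le v (w - p₀), le_abs_self R]
  have hbdd : IntegrableOn (fun w => log ‖p₀ + v - w‖ * f w) (ball p₀ R) μ := by
    refine hfi.integrableOn.bdd_mul (c := 2 * |R| + 1)
      (by fun_prop : Measurable fun w => log ‖p₀ + v - w‖).aestronglyMeasurable ?_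
    filter_upwards [ae_restrict_mem measurableSet_ball] with w hw
    rw [Real.norm_eq_abs, abs_of_nonneg (log_nonneg (hq w hw).1)]
    exact (log_le_self (norm_nonneg _)).trans (hq w hw).2
  refine ((hint (p₀ + v)).integrableOn.add hbdd).congr (ae_restrict_of_ae ?_)
  filter_upwards [ae_log_norm_div_norm_sub_eq (p₀ + v)] with w hw
  simp only [Pi.add_apply, hw]; ring

theorem integral_log_norm_div_norm_sub_mul_eq [NullSingletonClass μ] (hs : MeasurableSet s)
    (hz : Integrable (fun w => log (‖w‖ / ‖z - w‖) * f w) μ)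
    (h0 : IntegrableOn (fun w => log ‖w‖ * f w) s μ) :
    ∫ w, log (‖w‖ / ‖z - w‖) * f w ∂μ = ∫ w in sᶜ, log (‖w‖ / ‖z - w‖) * f w ∂μ +
      ∫ w in s, log ‖w‖ * f w ∂μ - ∫ w in s, log ‖z - w‖ * f w ∂μ := by
  have hsplit : ∫ w in s, log (‖w‖ / ‖z - w‖) * f w ∂μ =
      ∫ w in s, (log ‖w‖ * f w - log ‖z - w‖ * f w) ∂μ := by
    refine integral_congr_ae (ae_restrict_of_ae ?_)
    filter_upwards [ae_log_norm_div_norm_sub_eq z] with w hw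
    rw [hw]; ring
  rw [← integral_add_compl hs hz, hsplit,
    integral_sub h0 (integrableOn_log_norm_sub_mul hz h0)]
  ring

theorem abs_setIntegral_compl_ball_log_norm_div_sub_le [NullSingletonClass μ] [BorelSpace E]
    (hf0 : 0 ≤ f) (hfi : Integrable f μ)
    (hz : Integrable (fun w => log (‖w‖ / ‖z - w‖) * f w) μ)
    (hp₀ : Integrable (fun w => log (‖w‖ / ‖p₀ - w‖) * f w) μ) (hzp : dist z p₀ ≤ r)
    (hrR : r < R) :
    |∫ w in (ball p₀ R)ᶜ, log (‖w‖ / ‖z - w‖) * f w ∂μ -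
        ∫ w in (ball p₀ R)ᶜ, log (‖w‖ / ‖p₀ - w‖) * f w ∂μ| ≤
      r / (R - r) * ∫ w, f w ∂μ := by
  have hr : 0 ≤ r := dist_nonneg.trans hzp
  rw [← integral_sub hz.integrableOn hp₀.integrableOn, ← Real.norm_eq_abs]
  calc _ ≤ ∫ w in (ball p₀ R)ᶜ, r / (R - r) * f w ∂μ := by
        refine norm_integral_le_of_norm_le (hfi.integrableOn.const_mul _) ?_
        filter_upwards [ae_restrict_mem measurableSet_ball.compl,
          ae_restrict_of_ae (ae_log_norm_div_norm_sub_eq (μ := μ) z),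
          ae_restrict_of_ae (ae_log_norm_div_norm_sub_eq (μ := μ) p₀)] with w hw hwz hwp
        have hRw : R ≤ ‖p₀ - w‖ := by simpa [dist_eq_norm', norm_sub_rev] using hw
        have hdiff : |‖p₀ - w‖ - ‖z - w‖| ≤ r := by
          refine (abs_norm_sub_norm_le _ _).trans ?_
          simpa [dist_eq_norm, norm_sub_rev] using hzp
        have hzw : R - r ≤ ‖z - w‖ := by linarith [abs_le.1 hdiff]
        have hlog := (abs_log_sub_log_le (sub_pos.2 hrR) (by linarith) hzw).trans
          (div_le_div_of_nonneg_right hdiff (sub_pos.2 hrR).le)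
        rw [Real.norm_eq_abs, hwz, hwp, ← sub_mul, abs_mul, abs_of_nonneg (hf0 w)]
        exact mul_le_mul_of_nonneg_right (by simpa using hlog) (hf0 w)
    _ ≤ r / (R - r) * ∫ w, f w ∂μ := by
        rw [integral_const_mul]
        exact mul_le_mul_of_nonneg_left (setIntegral_le_integral hfi (ae_of_all _ hf0))
          (div_nonneg hr (sub_pos.2 hrR).le)

theorem setIntegral_ball_log_norm_sub_mul_le [BorelSpace E] (hf0 : 0 ≤ f) (hfi : Integrable f μ)
    (hint : IntegrableOn (fun w => log ‖z - w‖ * f w) (ball p₀ R) μ) (hzp : dist z p₀ ≤ r)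
    (hRr : 1 ≤ R + r) :
    ∫ w in ball p₀ R, log ‖z - w‖ * f w ∂μ ≤ log (R + r) * ∫ w, f w ∂μ := by
  have hlog : ∀ w ∈ ball p₀ R, log ‖z - w‖ ≤ log (R + r) := by
    intro w hw
    rcases (norm_nonneg (z - w)).eq_or_lt with h | h
    · rw [← h, log_zero]; exact log_nonneg hRr
    · refine log_le_log h ?_
      rw [← dist_eq_norm]
      linarith [dist_triangle z p₀ w, mem_ball'.1 hw]
  calc ∫ w in ball p₀ R, log ‖z - w‖ * f w ∂μ ≤ ∫ w in ball p₀ R, log (R + r) * f w ∂μ :=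
        setIntegral_mono_on hint (hfi.integrableOn.const_mul _) measurableSet_ball
          fun w hw => mul_le_mul_of_nonneg_right (hlog w hw) (hf0 w)
    _ ≤ log (R + r) * ∫ w, f w ∂μ := by
        rw [integral_const_mul]
        exact mul_le_mul_of_nonneg_left (setIntegral_le_integral hfi (ae_of_all _ hf0))
          (log_nonneg hRr)

theorem integral_log_norm_div_norm_sub_mul_le_of_neg_lt [NormedSpace ℝ E] [Nontrivial E]
    [BorelSpace E] [NullSingletonClass μ] (hf0 : 0 ≤ f) (hfi : Integrable f μ)
    (hint : ∀ x, Integrable (fun w => log (‖w‖ / ‖x - w‖) * f w) μ) (hzp : dist z p₀ ≤ r)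
    (hrR : r < R) {m : ℝ} (hm : -∫ w in ball p₀ R, log ‖z - w‖ * f w ∂μ < m) :
    ∫ w, log (‖w‖ / ‖z - w‖) * f w ∂μ ≤
      ∫ w in (ball p₀ R)ᶜ, log (‖w‖ / ‖p₀ - w‖) * f w ∂μ + ∫ w in ball p₀ R, log ‖w‖ * f w ∂μ +
        (r / (R - r) * ∫ w, f w ∂μ + m) := by
  rw [integral_log_norm_div_norm_sub_mul_eq measurableSet_ball (hint z)
    (integrableOn_ball_log_norm_mul hfi hint p₀ R)]
  linarith [abs_le.1 (abs_setIntegral_compl_ball_log_norm_div_sub_le hf0 hfi (hint z) (hint p₀)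
    hzp hrR)]

theorem le_integral_log_norm_div_norm_sub_mul [NormedSpace ℝ E] [Nontrivial E]
    [BorelSpace E] [NullSingletonClass μ] (hf0 : 0 ≤ f) (hfi : Integrable f μ)
    (hint : ∀ x, Integrable (fun w => log (‖w‖ / ‖x - w‖) * f w) μ) (hzp : dist z p₀ ≤ r)
    (hrR : r < R) (hRr : 1 ≤ R + r) :
    ∫ w in (ball p₀ R)ᶜ, log (‖w‖ / ‖p₀ - w‖) * f w ∂μ + ∫ w in ball p₀ R, log ‖w‖ * f w ∂μ -
        (r / (R - r) + log (R + r)) * ∫ w, f w ∂μ ≤ ∫ w, log (‖w‖ / ‖z - w‖) * f w ∂μ := by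
  have h0 := integrableOn_ball_log_norm_mul hfi hint p₀ R
  rw [integral_log_norm_div_norm_sub_mul_eq measurableSet_ball (hint z) h0]
  linarith [abs_le.1 (abs_setIntegral_compl_ball_log_norm_div_sub_le hf0 hfi (hint z) (hint p₀)
    hzp hrR), setIntegral_ball_log_norm_sub_mul_le hf0 hfi
    (integrableOn_log_norm_sub_mul (hint z) h0) hzp hRr]

end LogPotential

section Slab

variable {E : Type*} [NormedAddCommGroup E] [InnerProductSpace ℝ E] [FiniteDimensional ℝ E]
  [MeasurableSpace E] [BorelSpace E] (μ : Measure E) [μ.IsAddHaarMeasure]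

theorem addHaar_setOf_inner_eq {e : E} (he : e ≠ 0) (c : ℝ) :
    μ {w | ⟪e, w⟫ = c} = 0 := by
  set p : E := (c / ‖e‖ ^ 2) • e
  have hp : ⟪e, p⟫ = c := by
    rw [inner_smul_right, real_inner_self_eq_norm_sq]
    field_simp [norm_ne_zero_iff.2 he]
  have hset : {w | ⟪e, w⟫ = c} = (· + -p) ⁻¹' (LinearMap.ker (innerₛₗ ℝ e) : Set E) := by
    ext w
    simp [inner_add_right, inner_neg_right, hp, add_neg_eq_zero]
  rw [hset, measure_preimage_add_right]
  refine Measure.addHaar_submodule μ _ fun htop => he ?_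
  have : e ∈ LinearMap.ker (innerₛₗ ℝ e) := htop ▸ Submodule.mem_top
  simpa using this

theorem ofReal_neg_setIntegral_log_norm_sub_mul_le {f : E → ℝ} (hf0 : 0 ≤ f) {e : E}
    (he : ‖e‖ = 1) (s : Set E) (z : E) :
    ENNReal.ofReal (-∫ w in s, log ‖z - w‖ * f w ∂μ) ≤
      ∫⁻ w in s, ENNReal.ofReal (-log |⟪e, z⟫ - ⟪e, w⟫|) * ENNReal.ofReal (f w) ∂μ := by
  rw [← integral_neg]
  refine (ofReal_integral_le_lintegral_ofReal _).trans (lintegral_mono_ae ?_)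
  have hnull := addHaar_setOf_inner_eq μ (norm_ne_zero_iff.1 (he ▸ one_ne_zero)) ⟪e, z⟫
  filter_upwards [ae_restrict_of_ae (compl_mem_ae_iff.2 hnull)] with w hw
  have hpos : 0 < |⟪e, z⟫ - ⟪e, w⟫| := abs_pos.2 (sub_ne_zero.2 (Ne.symm hw))
  have hle : |⟪e, z⟫ - ⟪e, w⟫| ≤ ‖z - w‖ := by
    simpa [← inner_sub_right, he] using abs_real_inner_le_norm e (z - w)
  rw [← ENNReal.ofReal_mul' (hf0 w), ← neg_mul]
  exact ENNReal.ofReal_le_ofReal (mul_le_mul_of_nonneg_right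
    (neg_le_neg (log_le_log hpos hle)) (hf0 w))

theorem lintegral_setLIntegral_ofReal_neg_log_abs_sub_inner_mul_le {f : E → ℝ}
    (hfm : Measurable f) (hf0 : 0 ≤ f) (hfi : Integrable f μ) (e : E) (s : Set E) :
    ∫⁻ σ, ∫⁻ w in s, ENNReal.ofReal (-log |σ - ⟪e, w⟫|) * ENNReal.ofReal (f w) ∂μ ≤
      ENNReal.ofReal (2 * ∫ w, f w ∂μ) := by
  rw [lintegral_lintegral_ofReal_neg_log_abs_sub_mul (by fun_prop) (by fun_prop),
    ENNReal.ofReal_mul zero_le_two, ENNReal.ofReal_ofNat,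
    ofReal_integral_eq_lintegral_ofReal hfi (ae_of_all _ hf0)]
  gcongr
  exact Measure.restrict_le_self

theorem exists_subset_Icc_one_le_measureReal_forall_neg_setIntegral_log_norm_sub_mul_lt
    {f : E → ℝ} (hfm : Measurable f) (hf0 : 0 ≤ f) (hfi : Integrable f μ) (s : Set E)
    {γ : ℝ → E} (hγ : LipschitzWith 1 γ) {L : ℝ} (hL : 0 ≤ L) (hγL : dist (γ 0) (γ L) = 2) :
    ∃ T ⊆ Icc 0 L, MeasurableSet T ∧ 1 ≤ volume.real T ∧
      ∀ t ∈ T, -∫ w in s, log ‖γ t - w‖ * f w ∂μ < 2 * ∫ w, f w ∂μ + 1 := by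
  set e : E := (2 : ℝ)⁻¹ • (γ L - γ 0)
  have hnorm : ‖γ L - γ 0‖ = 2 := by rw [← dist_eq_norm, dist_comm, hγL]
  have he : ‖e‖ = 1 := by simp [e, norm_smul, hnorm]
  set h : ℝ → ℝ := fun t => ⟪e, γ t⟫
  have hh : LipschitzWith 1 h := LipschitzWith.of_dist_le_mul fun a b => by
    have := abs_real_inner_le_norm e (γ a - γ b)
    rw [he, one_mul, ← dist_eq_norm, inner_sub_right] at this
    simpa [h, Real.dist_eq] using this.trans (hγ.dist_le_mul a b)
  have hhL : h L = h 0 + 2 := by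
    have : ⟪e, γ L - γ 0⟫ = 2 := by
      rw [show γ L - γ 0 = (2 : ℝ) • e by simp [e]]
      rw [inner_smul_right, real_inner_self_eq_norm_sq, he]; norm_num
    simp only [h]; rw [← this, inner_sub_right]; ring
  set W : ℝ → ℝ≥0∞ := fun σ =>
    ∫⁻ w in s, ENNReal.ofReal (-log |σ - ⟪e, w⟫|) * ENNReal.ofReal (f w) ∂μ
  have hWm : Measurable W := by
    refine Measurable.lintegral_prod_right (f := fun σ w =>
      ENNReal.ofReal (-log |σ - ⟪e, w⟫|) * ENNReal.ofReal (f w)) ?_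
    fun_prop
  have hW := lintegral_setLIntegral_ofReal_neg_log_abs_sub_inner_mul_le μ hfm hf0 hfi e s
  have hβ : 0 ≤ ∫ w, f w ∂μ := integral_nonneg hf0
  set G := Icc (h 0) (h 0 + 2) ∩ {σ | W σ < ENNReal.ofReal (2 * ∫ w, f w ∂μ + 1)}
  refine ⟨Icc 0 L ∩ h ⁻¹' G, inter_subset_left, measurableSet_Icc.inter
    (hh.continuous.measurable (measurableSet_Icc.inter (measurableSet_lt hWm measurable_const))),
    ?_, ?_⟩
  · rw [measureReal_def, ← ENNReal.toReal_one]
    refine ENNReal.toReal_mono (measure_mono inter_subset_left |>.trans_lt measure_Icc_lt_top).ne ?_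
    calc 1 ≤ volume G := one_le_volume_Icc_inter_setOf_lt hWm.aemeasurable (by positivity) hW _
      _ ≤ _ := volume_le_volume_Icc_inter_preimage hh hL (hhL ▸ inter_subset_left)
  · rintro t ⟨-, -, hWt⟩
    exact (ENNReal.ofReal_lt_ofReal_iff (by linarith)).1
      ((ofReal_neg_setIntegral_log_norm_sub_mul_le μ hf0 he s (γ t)).trans_lt hWt)

end Slab

theorem cN_pos {n : ℕ} (hn : 0 < n) : 0 < cN n := by
  have := Real.Gamma_pos_of_pos (by positivity : (0 : ℝ) < n / 2)
  unfold cN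
  positivity

theorem measurable_logPot {n : ℕ} {f : EuclideanSpace ℝ (Fin n) → ℝ} (hf : Measurable f) :
    Measurable (logPot n f) := by
  have : Measurable fun p : EuclideanSpace ℝ (Fin n) × EuclideanSpace ℝ (Fin n) =>
      log (‖p.2‖ / ‖p.1 - p.2‖) * f p.2 := by fun_prop
  exact (StronglyMeasurable.integral_prod_right (f := fun x y => log (‖y‖ / ‖x - y‖) * f y)
    this.stronglyMeasurable).measurable.const_mul _

theorem integrableOn_Icc_exp_neg_logPot_comp {n : ℕ} (hn : 0 < n)
    {f : EuclideanSpace ℝ (Fin n) → ℝ} (hfm : Measurable f) (hf0 : 0 ≤ f) (hfi : Integrable f)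
    (hint : ∀ x, Integrable (fun w => log (‖w‖ / ‖x - w‖) * f w))
    {γ : ℝ → EuclideanSpace ℝ (Fin n)} (hγ : Continuous γ) {a b : ℝ} {p₀ : EuclideanSpace ℝ (Fin n)}
    (hγp₀ : ∀ t ∈ Icc a b, dist (γ t) p₀ ≤ 1) :
    IntegrableOn (fun t => exp (-logPot n f (γ t))) (Icc a b) := by
  have : NeZero n := ⟨hn.ne'⟩
  set Q := (∫ w in (ball p₀ 10)ᶜ, log (‖w‖ / ‖p₀ - w‖) * f w) +
    (∫ w in ball p₀ 10, log ‖w‖ * f w) - (1 / (10 - 1) + log (10 + 1)) * ∫ w, f w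
  refine IntegrableOn.of_bound measure_Icc_lt_top
    ((measurable_logPot hfm).comp hγ.measurable).neg.exp.aestronglyMeasurable
    (exp (-(1 / cN n * Q))) ((ae_restrict_iff' measurableSet_Icc).2 (ae_of_all _ fun t ht => ?_))
  rw [norm_of_nonneg (exp_pos _).le, exp_le_exp, logPot, neg_le_neg_iff]
  exact mul_le_mul_of_nonneg_left (le_integral_log_norm_div_norm_sub_mul (r := 1) (R := 10)
    hf0 hfi hint (hγp₀ t ht) (by norm_num) (by norm_num)) (one_div_nonneg.2 (cN_pos hn).le)

theorem exp_neg_div_mul_exp_mul_exp_le {c K A B P : ℝ} (hc : 0 < c) (hP : P ≤ A + B + K) :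
    exp (-K / c) * exp (-(1 / c) * A) * exp (-(1 / c) * B) ≤ exp (-(1 / c * P)) := by
  rw [← exp_add, ← exp_add, exp_le_exp]
  calc -K / c + -(1 / c) * A + -(1 / c) * B = -((A + B + K) / c) := by ring
    _ ≤ -(P / c) := neg_le_neg (div_le_div_of_nonneg_right hP hc.le)
    _ = -(1 / c * P) := by ring

/-- lower bound along curves. There is `C₄ = C₄(n,β) > 0` such
that for `f ≥ 0` with `∫ f = β`, `u₋ = -logPot f`, points `x, y` at distance `2`
with midpoint `p₀`, and any 1-Lipschitz curve `γ : [0,L] → ℝⁿ` from `x` to `y`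
inside the closed unit ball around `p₀`,
`∫₀^L e^{u₋(γ(t))} dt ≥ C₄ e^{u₂(p₀)} e^{c̄}`. -/
theorem curve_integral_exp_neg_logPot_ge
    (n : ℕ) (hn : 2 ≤ n) (β : ℝ) :
    ∃ C₄ : ℝ, 0 < C₄ ∧
      ∀ f : EuclideanSpace ℝ (Fin n) → ℝ,
        Continuous f →
        (∀ z, 0 ≤ f z) →
        Integrable f →
        (∀ x : EuclideanSpace ℝ (Fin n),
          Integrable (fun z => Real.log (‖z‖ / ‖x - z‖) * f z)) →
        (∫ z, f z) = β →
        ∀ x y : EuclideanSpace ℝ (Fin n), dist x y = 2 →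
          ∀ L : ℝ, 0 ≤ L →
            ∀ γ : ℝ → EuclideanSpace ℝ (Fin n),
              LipschitzOnWith 1 γ (Set.Icc 0 L) → γ 0 = x → γ L = y →
              (∀ t ∈ Set.Icc 0 L, γ t ∈ closedBall (midpoint ℝ x y) 1) →
              C₄ *
                  Real.exp (-(1 / cN n) *
                    ∫ z in (ball (midpoint ℝ x y) 10)ᶜ,
                      Real.log (‖z‖ / ‖midpoint ℝ x y - z‖) * f z) *
                  Real.exp (-(1 / cN n) *
                    ∫ z in ball (midpoint ℝ x y) 10, Real.log ‖z‖ * f z) ≤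
                ∫ t in (0 : ℝ)..L, Real.exp (-(logPot n f (γ t))) := by
  have hc := cN_pos (by omega : 0 < n)
  have : NeZero n := ⟨by omega⟩
  refine ⟨exp (-(1 / (10 - 1) * β + (2 * β + 1)) / cN n), exp_pos _, ?_⟩
  rintro f hfc hf0 hfi hint rfl x y hxy L hL γ hγ rfl rfl hball
  obtain ⟨γ', hγ', hγγ'⟩ := hγ.exists_lipschitzWith_eqOn_Icc hL
  set p₀ := midpoint ℝ (γ 0) (γ L)
  have hγ'p₀ : ∀ t ∈ Icc 0 L, dist (γ' t) p₀ ≤ 1 := fun t ht => hγγ' ht ▸ hball t ht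
  obtain ⟨T, hTL, hTm, hT1, hTnear⟩ :=
    exists_subset_Icc_one_le_measureReal_forall_neg_setIntegral_log_norm_sub_mul_lt volume
      hfc.measurable hf0 hfi (ball p₀ 10) hγ' hL
      (by rwa [hγγ' (left_mem_Icc.2 hL), hγγ' (right_mem_Icc.2 hL)])
  rw [intervalIntegral.integral_congr (g := fun t => exp (-logPot n f (γ' t))) fun t ht => by
    rw [uIcc_of_le hL] at ht; simp only [hγγ' ht]]
  refine (le_mul_of_one_le_right (by positivity) hT1).trans
    (mul_measureReal_le_intervalIntegral hL
      (integrableOn_Icc_exp_neg_logPot_comp (by omega) hfc.measurable hf0 hfi hint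
        hγ'.continuous hγ'p₀)
      (fun _ _ => (exp_pos _).le) hTm hTL fun t ht => exp_neg_div_mul_exp_mul_exp_le hc ?_)
  exact integral_log_norm_div_norm_sub_mul_le_of_neg_lt (r := 1) (R := 10) hf0 hfi hint
    (hγ'p₀ t (hTL ht)) (by norm_num) (hTnear t ht)
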